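/- Let (X_t) be a discrete-time nonnegative adapted process on a filtered probability space and suppose there exist γ ∈ (0, 1) and C₁ > 0 such that 𝔼[X_{n+1} | ℱ_n] ≤ γ X_n + C₁ for all n. Define δ = min{n ∈ ℕ : X_n ≤ 2C₁/(1−γ)}. Then there exist α > 0 and c > 0, depending only on γ and C₁, such that 𝔼[e^{α δ}] ≤ c (1 + X_0). -/

import Mathlib

open MeasureTheory

/-- `e^{α m}` for an extended-natural time `m`, with value `∞` when `m = ∞`. -/
noncomputable def expTime (α : ℝ) : ℕ∞ → ENNReal
  | ⊤ => ⊤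
  | (n : ℕ) => ENNReal.ofReal (Real.exp (α * n))

/-!
Let `M = 2C₁/(1-γ)` and `ρ = (1+γ)/2 < 1`. Above `M` the drift bound `γx + C₁` is at most `ρx`,
so on the event `{δ > n}` that `X` has stayed above `M` up to time `n`, conditioning on `ℱ n`
gives `𝔼[X_{n+1}; δ > n+1] ≤ ρ 𝔼[X_n; δ > n]`, hence `𝔼[X_n; δ > n] ≤ ρⁿ 𝔼X₀` and, by Markov,
`ℙ(δ > n) ≤ ρⁿ 𝔼X₀ / M`. Writing `e^{αδ} = 1 + ∑_{n < δ} (e^α - 1) e^{αn}`, these geometric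
tails make `𝔼 e^{αδ}` finite and linear in `𝔼X₀` as soon as `e^α ρ < 1`.
-/

open Real

lemma lt_sInf_setOf_cast_iff (p : ℕ → Prop) (n : ℕ) :
    (n : ℕ∞) < sInf {k : ℕ∞ | ∃ m : ℕ, k = m ∧ p m} ↔ ∀ k ≤ n, ¬ p k := by
  rw [← ENat.add_one_le_iff (ENat.natCast_ne_top n)]
  simp only [le_sInf_iff, Set.mem_ofPred_eq, forall_exists_index, and_imp]
  constructor
  · intro h k hk hpk
    have := h k k rfl hpk
    norm_cast at this
    omega
  · rintro h _ k rfl hpk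
    by_contra hlt
    exact h k (by norm_cast at hlt; omega) hpk

lemma expTime_eq_one_add_tsum {α : ℝ} (hα : 0 < α) (d : ℕ∞) :
    expTime α d = 1 + ∑' n : ℕ,
      if (n : ℕ∞) < d then ENNReal.ofReal ((exp α - 1) * exp α ^ n) else 0 := by
  have hx : 0 < exp α - 1 := by linarith [one_lt_exp_iff.mpr hα]
  cases d with
  | top =>
    have hdiv : ∑' _ : ℕ, ENNReal.ofReal (exp α - 1) = ⊤ :=
      ENNReal.tsum_const_eq_top_of_ne_zero (by simpa using hx)
    refine (top_unique ?_).symm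
    calc ⊤ = ∑' _ : ℕ, ENNReal.ofReal (exp α - 1) := hdiv.symm
      _ ≤ _ := by
        refine ENNReal.tsum_le_tsum fun n => ?_
        rw [if_pos (ENat.natCast_lt_top n)]
        exact ENNReal.ofReal_le_ofReal
          (le_mul_of_one_le_right hx.le (one_le_pow₀ (one_le_exp hα.le)))
      _ ≤ _ := le_add_self
  | coe d =>
    have hsum : ∑ k ∈ Finset.range d, (exp α - 1) * exp α ^ k = exp α ^ d - 1 := by
      rw [← Finset.mul_sum, mul_comm, geom_sum_mul]
    have hpow : 1 ≤ exp α ^ d := one_le_pow₀ (one_le_exp hα.le)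
    rw [tsum_eq_sum (s := Finset.range d) fun k hk => by simp_all, Finset.sum_ite_of_true
      fun k hk => by exact_mod_cast Finset.mem_range.mp hk,
      ← ENNReal.ofReal_sum_of_nonneg fun k _ => by positivity, hsum, ← ENNReal.ofReal_one,
      ← ENNReal.ofReal_add zero_le_one (by linarith), add_sub_cancel]
    change ENNReal.ofReal (exp (α * d)) = _
    rw [mul_comm, exp_nat_mul]

lemma lintegral_expTime_le_of_tail_le {Ω : Type*} [MeasurableSpace Ω] {μ : Measure Ω}
    [IsProbabilityMeasure μ] {τ : Ω → ℕ∞} (hτ : ∀ n : ℕ, MeasurableSet {ω | (n : ℕ∞) < τ ω})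
    {α K r : ℝ} (hα : 0 < α) (hK : 0 ≤ K) (hr : 0 ≤ r) (hαr : exp α * r < 1)
    (htail : ∀ n : ℕ, μ {ω | (n : ℕ∞) < τ ω} ≤ ENNReal.ofReal (K * r ^ n)) :
    ∫⁻ ω, expTime α (τ ω) ∂μ ≤ 1 + ENNReal.ofReal ((exp α - 1) / (1 - exp α * r) * K) := by
  have hx : 0 ≤ exp α - 1 := by linarith [one_le_exp hα.le]
  have hxr : 0 ≤ exp α * r := by positivity
  calc ∫⁻ ω, expTime α (τ ω) ∂μ
      = ∫⁻ ω, 1 + ∑' n : ℕ, {ω | (n : ℕ∞) < τ ω}.indicator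
          (fun _ => ENNReal.ofReal ((exp α - 1) * exp α ^ n)) ω ∂μ := by
        simp only [expTime_eq_one_add_tsum hα, Set.indicator_apply, Set.mem_ofPred_eq]
    _ = 1 + ∑' n : ℕ, ENNReal.ofReal ((exp α - 1) * exp α ^ n) * μ {ω | (n : ℕ∞) < τ ω} := by
        rw [lintegral_add_left measurable_const, lintegral_tsum fun n =>
            (measurable_const.indicator (hτ n)).aemeasurable, lintegral_one, measure_univ]
        simp only [lintegral_indicator_const (hτ _)]
    _ ≤ 1 + ∑' n : ℕ, ENNReal.ofReal ((exp α - 1) * K * (exp α * r) ^ n) := by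
        gcongr with n
        calc _ ≤ ENNReal.ofReal ((exp α - 1) * exp α ^ n) * ENNReal.ofReal (K * r ^ n) := by
              gcongr; exact htail n
          _ = _ := by rw [← ENNReal.ofReal_mul (by positivity), mul_pow]; ring_nf
    _ = 1 + ENNReal.ofReal ((exp α - 1) / (1 - exp α * r) * K) := by
        rw [← ENNReal.ofReal_tsum_of_nonneg (fun n => by positivity)
          ((summable_geometric_of_lt_one hxr hαr).mul_left _), tsum_mul_left,
          tsum_geometric_of_lt_one hxr hαr]
        ring_nf

lemma exists_pos_exp_mul_lt_one {ρ : ℝ} (hρ0 : 0 ≤ ρ) (hρ1 : ρ < 1) :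
    ∃ α > (0 : ℝ), exp α * ρ < 1 := by
  refine ⟨log (2 / (1 + ρ)), log_pos ((one_lt_div (by linarith)).mpr (by linarith)), ?_⟩
  rw [exp_log (by positivity), div_mul_eq_mul_div, div_lt_one (by linarith)]
  linarith

section Drift

variable {Ω : Type*} {m : MeasurableSpace Ω} {μ : Measure Ω} {ℱ : Filtration ℕ m}
  {X : ℕ → Ω → ℝ}

def aboveUntil (X : ℕ → Ω → ℝ) (M : ℝ) (n : ℕ) : Set Ω := {ω | ∀ k ≤ n, M < X k ω}

lemma aboveUntil_succ_subset (M : ℝ) (n : ℕ) : aboveUntil X M (n + 1) ⊆ aboveUntil X M n :=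
  fun _ h k hk => h k (hk.trans n.le_succ)

lemma measurableSet_aboveUntil (hX : Adapted ℱ X) (M : ℝ) (n : ℕ) :
    MeasurableSet[ℱ n] (aboveUntil X M n) := by
  have : aboveUntil X M n = ⋂ k ∈ Set.Iic n, {ω | M < X k ω} := by
    ext; simp [aboveUntil]
  rw [this]
  exact .biInter (Set.to_countable _) fun k hk =>
    ℱ.mono hk _ (measurableSet_lt measurable_const (hX k))

lemma setIntegral_succ_le_of_drift [IsFiniteMeasure μ] {γ C₁ ρ : ℝ}
    (hint : ∀ n, Integrable (X n) μ) {n : ℕ}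
    (hdrift : ∀ᵐ ω ∂μ, μ[X (n + 1)|ℱ n] ω ≤ γ * X n ω + C₁) {s : Set Ω}
    (hs : MeasurableSet[ℱ n] s) (hρ : ∀ ω ∈ s, γ * X n ω + C₁ ≤ ρ * X n ω) :
    ∫ ω in s, X (n + 1) ω ∂μ ≤ ρ * ∫ ω in s, X n ω ∂μ := by
  have hint' : Integrable (fun ω => γ * X n ω + C₁) μ :=
    ((hint n).const_mul γ).add (integrable_const C₁)
  calc ∫ ω in s, X (n + 1) ω ∂μ = ∫ ω in s, μ[X (n + 1)|ℱ n] ω ∂μ :=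
        (setIntegral_condExp (ℱ.le n) (hint (n + 1)) hs).symm
    _ ≤ ∫ ω in s, (γ * X n ω + C₁) ∂μ :=
        integral_mono_ae integrable_condExp.integrableOn hint'.integrableOn
          (ae_restrict_of_ae hdrift)
    _ ≤ ∫ ω in s, ρ * X n ω ∂μ :=
        setIntegral_mono_on hint'.integrableOn ((hint n).const_mul ρ).integrableOn
          (ℱ.le n _ hs) hρ
    _ = ρ * ∫ ω in s, X n ω ∂μ := integral_const_mul ρ _

variable [IsFiniteMeasure μ] {γ C₁ ρ M : ℝ} (hX : Adapted ℱ X)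
  (hint : ∀ n, Integrable (X n) μ) (hnonneg : ∀ n ω, 0 ≤ X n ω)
  (hdrift : ∀ n, ∀ᵐ ω ∂μ, μ[X (n + 1)|ℱ n] ω ≤ γ * X n ω + C₁)
  (hM : ∀ x, M < x → γ * x + C₁ ≤ ρ * x)
include hX hint hnonneg hdrift hM

lemma setIntegral_aboveUntil_le_pow (hρ : 0 ≤ ρ) (n : ℕ) :
    ∫ ω in aboveUntil X M n, X n ω ∂μ ≤ ρ ^ n * ∫ ω, X 0 ω ∂μ := by
  induction n with
  | zero => simpa using setIntegral_le_integral (hint 0) (.of_forall (hnonneg 0))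
  | succ n ih =>
    calc ∫ ω in aboveUntil X M (n + 1), X (n + 1) ω ∂μ
        ≤ ∫ ω in aboveUntil X M n, X (n + 1) ω ∂μ :=
          setIntegral_mono_set (hint (n + 1)).integrableOn (.of_forall (hnonneg (n + 1)))
            (aboveUntil_succ_subset M n).eventuallyLE
      _ ≤ ρ * ∫ ω in aboveUntil X M n, X n ω ∂μ :=
          setIntegral_succ_le_of_drift hint (hdrift n) (measurableSet_aboveUntil hX M n)
            fun ω hω => hM _ (hω n le_rfl)
      _ ≤ ρ * (ρ ^ n * ∫ ω, X 0 ω ∂μ) := by gcongr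
      _ = ρ ^ (n + 1) * ∫ ω, X 0 ω ∂μ := by ring

lemma measure_aboveUntil_le (hρ : 0 ≤ ρ) (hM0 : 0 < M) (n : ℕ) :
    μ (aboveUntil X M n) ≤ ENNReal.ofReal ((∫ ω, X 0 ω ∂μ) / M * ρ ^ n) := by
  have hmarkov : M * μ.real (aboveUntil X M n) ≤ ∫ ω in aboveUntil X M n, X n ω ∂μ :=
    setIntegral_ge_of_const_le_real (ℱ.le n _ (measurableSet_aboveUntil hX M n))
      (measure_ne_top μ _) (fun ω hω => (hω n le_rfl).le) (hint n).integrableOn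
  have hdecay := setIntegral_aboveUntil_le_pow hX hint hnonneg hdrift hM hρ n
  rw [← ofReal_measureReal]
  refine ENNReal.ofReal_le_ofReal ?_
  rw [div_mul_eq_mul_div, le_div_iff₀ hM0]
  linarith

end Drift

/-- Lyapunov drift condition implies an exponential moment for the hitting time of the
set `{x : x ≤ 2C₁/(1−γ)}`. -/
theorem exp_moment_hitting_time_of_drift
    {Ω : Type*} {m : MeasurableSpace Ω} (μ : Measure Ω) [IsProbabilityMeasure μ]
    (ℱ : Filtration ℕ m) (X : ℕ → Ω → ℝ)
    (hadapted : Adapted ℱ X) (hint : ∀ n, Integrable (X n) μ)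
    (hnonneg : ∀ n ω, 0 ≤ X n ω)
    {γ C₁ : ℝ} (hγ : 0 < γ) (hγ1 : γ < 1) (hC₁ : 0 < C₁)
    (hdrift : ∀ n, ∀ᵐ ω ∂μ, (μ[X (n + 1)|ℱ n]) ω ≤ γ * X n ω + C₁) :
    ∃ α > (0 : ℝ), ∃ c > (0 : ℝ),
      ∫⁻ ω, expTime α
          (sInf {k : ℕ∞ | ∃ n : ℕ, k = n ∧ X n ω ≤ 2 * C₁ / (1 - γ)}) ∂μ ≤
        ENNReal.ofReal (c * (1 + ∫ ω, X 0 ω ∂μ)) := by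
  set M := 2 * C₁ / (1 - γ)
  have hM0 : 0 < M := div_pos (by positivity) (by linarith)
  have hMρ (x : ℝ) (hx : M < x) : γ * x + C₁ ≤ (1 + γ) / 2 * x := by
    have : 2 * C₁ < (1 - γ) * x := by rwa [div_lt_iff₀' (by linarith)] at hx
    linarith
  obtain ⟨α, hα, hαρ⟩ := exists_pos_exp_mul_lt_one (ρ := (1 + γ) / 2) (by linarith) (by linarith)
  set A := (exp α - 1) / (1 - exp α * ((1 + γ) / 2))
  have hA : 0 ≤ A := div_nonneg (by linarith [one_le_exp hα.le]) (by linarith)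
  set E₀ := ∫ ω, X 0 ω ∂μ
  have hE₀ : 0 ≤ E₀ := integral_nonneg (hnonneg 0)
  refine ⟨α, hα, 1 + A / M, by positivity, ?_⟩
  have hτ (n : ℕ) : {ω | (n : ℕ∞) < sInf {k : ℕ∞ | ∃ n : ℕ, k = n ∧ X n ω ≤ M}} =
      aboveUntil X M n := by
    ext ω; simp [lt_sInf_setOf_cast_iff, aboveUntil]
  calc _ ≤ 1 + ENNReal.ofReal (A * (E₀ / M)) := lintegral_expTime_le_of_tail_le
        (fun n => hτ n ▸ ℱ.le n _ (measurableSet_aboveUntil hadapted M n)) hα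
        (by positivity) (by linarith) hαρ
        (fun n => hτ n ▸ measure_aboveUntil_le hadapted hint hnonneg hdrift hMρ
          (by linarith) hM0 n)
    _ = ENNReal.ofReal (1 + A / M * E₀) := by
        rw [← ENNReal.ofReal_one, ← ENNReal.ofReal_add zero_le_one (by positivity)]
        ring_nf
    _ ≤ ENNReal.ofReal ((1 + A / M) * (1 + E₀)) :=
        ENNReal.ofReal_le_ofReal (by nlinarith [div_nonneg hA hM0.le])
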